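/- arXiv:2001.10213 — 2 statements merged into one kernel-verified Lean document; each statement's English description precedes it below -/
import Mathlib

section
/- Subsumption demodulation is sound: if a first-order interpretation satisfies the clauses l ≃ r ∨ C and L[t] ∨ D, where lσ = t for a substitution σ and Cσ ⊆ D as multisets of literals, then the interpretation also satisfies L[rσ] ∨ D. -/
/-- First-order terms over variables `V` and function symbols `F`. -/
inductive Tm (V F : Type) where
  | var : V → Tm V F
  | fn  : F → List (Tm V F) → Tm V F

/-- Applying a substitution (a map from variables to terms) to a term. -/
def Tm.subst {V F : Type} (σ : V → Tm V F) : Tm V F → Tm V F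
  | .var v => σ v
  | .fn f ts => .fn f (ts.attach.map (fun t => Tm.subst σ t.1))
termination_by t => sizeOf t
decreasing_by
  have := List.sizeOf_lt_of_mem t.2
  simp only [Tm.fn.sizeOf_spec]
  omega

/-- A first-order structure: a domain with interpretations of function and
predicate symbols. -/
structure Str (F P : Type) where
  dom : Type
  Fn : F → List dom → dom
  Pr : P → List dom → Prop

/-- Evaluation of a term in a structure under a variable assignment. -/
def Tm.eval {V F P : Type} (M : Str F P) (ν : V → M.dom) : Tm V F → M.dom
  | .var v => ν v
  | .fn f ts => M.Fn f (ts.attach.map (fun t => Tm.eval M ν t.1))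
termination_by t => sizeOf t
decreasing_by
  have := List.sizeOf_lt_of_mem t.2
  simp only [Tm.fn.sizeOf_spec]
  omega

/-- Literals of first-order logic with equality. -/
inductive Lit (V F P : Type) where
  | pos : P → List (Tm V F) → Lit V F P
  | neg : P → List (Tm V F) → Lit V F P
  | eq  : Tm V F → Tm V F → Lit V F P
  | ne  : Tm V F → Tm V F → Lit V F P

/-- Applying a substitution to a literal. -/
def Lit.subst {V F P : Type} (σ : V → Tm V F) : Lit V F P → Lit V F P
  | .pos p ts => .pos p (ts.map (Tm.subst σ))
  | .neg p ts => .neg p (ts.map (Tm.subst σ))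
  | .eq s t => .eq (s.subst σ) (t.subst σ)
  | .ne s t => .ne (s.subst σ) (t.subst σ)

/-- Satisfaction of a literal under a variable assignment. -/
def Lit.sat {V F P : Type} (M : Str F P) (ν : V → M.dom) : Lit V F P → Prop
  | .pos p ts => M.Pr p (ts.map (Tm.eval M ν))
  | .neg p ts => ¬ M.Pr p (ts.map (Tm.eval M ν))
  | .eq s t => s.eval M ν = t.eval M ν
  | .ne s t => s.eval M ν ≠ t.eval M ν

/-- A clause is a finite multiset of literals. -/
abbrev Clause (V F P : Type) := Multiset (Lit V F P)

/-- A structure satisfies a clause iff it satisfies its universal closure,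
i.e. under every assignment some literal of the clause is true. -/
def Clause.sat {V F P : Type} (M : Str F P) (C : Clause V F P) : Prop :=
  ∀ ν : V → M.dom, ∃ L ∈ C, L.sat M ν

/-- A term context: a term with exactly one hole. -/
inductive Ctx (V F : Type) where
  | hole : Ctx V F
  | fn : F → List (Tm V F) → Ctx V F → List (Tm V F) → Ctx V F

/-- Filling the hole of a term context with a term. -/
def Ctx.fill {V F : Type} : Ctx V F → Tm V F → Tm V F
  | .hole, t => t
  | .fn f pre c post, t => .fn f (pre ++ c.fill t :: post)

/-- A literal context `L[·]`: a literal with a distinguished occurrence of a term. -/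
inductive LCtx (V F P : Type) where
  | pos : P → List (Tm V F) → Ctx V F → List (Tm V F) → LCtx V F P
  | neg : P → List (Tm V F) → Ctx V F → List (Tm V F) → LCtx V F P
  | eqL : Ctx V F → Tm V F → LCtx V F P
  | eqR : Tm V F → Ctx V F → LCtx V F P
  | neL : Ctx V F → Tm V F → LCtx V F P
  | neR : Tm V F → Ctx V F → LCtx V F P

/-- `L.fill t` is the literal `L[t]`. -/
def LCtx.fill {V F P : Type} : LCtx V F P → Tm V F → Lit V F P
  | .pos p pre c post, t => .pos p (pre ++ c.fill t :: post)
  | .neg p pre c post, t => .neg p (pre ++ c.fill t :: post)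
  | .eqL c s, t => .eq (c.fill t) s
  | .eqR s c, t => .eq s (c.fill t)
  | .neL c s, t => .ne (c.fill t) s
  | .neR s c, t => .ne s (c.fill t)


theorem Tm.subst_fn {V F : Type} (σ : V → Tm V F) (f : F) (ts : List (Tm V F)) :
    (Tm.fn f ts).subst σ = .fn f (ts.map (Tm.subst σ)) := by
  rw [Tm.subst]
  congr 1
  rw [List.map_attach_eq_pmap]; apply List.pmap_eq_map

theorem Tm.eval_fn {V F P : Type} (M : Str F P) (ν : V → M.dom) (f : F) (ts : List (Tm V F)) :
    (Tm.fn f ts).eval M ν = M.Fn f (ts.map (Tm.eval M ν)) := by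
  rw [Tm.eval]
  congr 1
  rw [List.map_attach_eq_pmap]; apply List.pmap_eq_map

theorem Tm.eval_subst {V F P : Type} (M : Str F P) (ν : V → M.dom) (σ : V → Tm V F) :
    ∀ t : Tm V F, (t.subst σ).eval M ν = t.eval M (fun v => (σ v).eval M ν)
  | .var v => by rw [Tm.subst, Tm.eval]
  | .fn f ts => by
    rw [Tm.subst_fn, Tm.eval_fn, Tm.eval_fn, List.map_map]
    congr 1
    refine List.map_congr_left (fun x hx => ?_)
    exact Tm.eval_subst M ν σ x
termination_by t => sizeOf t
decreasing_by
  have := List.sizeOf_lt_of_mem hx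
  simp only [Tm.fn.sizeOf_spec]
  omega

theorem Ctx.fill_congr {V F P : Type} (M : Str F P) (ν : V → M.dom) (a b : Tm V F)
    (h : a.eval M ν = b.eval M ν) : ∀ c : Ctx V F, (c.fill a).eval M ν = (c.fill b).eval M ν
  | .hole => h
  | .fn f pre c post => by
    rw [Ctx.fill, Ctx.fill, Tm.eval_fn, Tm.eval_fn, List.map_append, List.map_append,
      List.map_cons, List.map_cons, Ctx.fill_congr M ν a b h c]

theorem LCtx.fill_congr {V F P : Type} (M : Str F P) (ν : V → M.dom) (a b : Tm V F)
    (h : a.eval M ν = b.eval M ν) (L : LCtx V F P) :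
    (L.fill a).sat M ν ↔ (L.fill b).sat M ν := by
  cases L <;>
    simp only [LCtx.fill, Lit.sat, List.map_append, List.map_cons,
      Ctx.fill_congr M ν a b h]

theorem Lit.sat_subst {V F P : Type} (M : Str F P) (ν : V → M.dom) (σ : V → Tm V F)
    (L : Lit V F P) : (L.subst σ).sat M ν ↔ L.sat M (fun v => (σ v).eval M ν) := by
  cases L <;> simp only [Lit.subst, Lit.sat, List.map_map, Tm.eval_subst,
    Function.comp_def]

/-- Soundness of subsumption demodulation: if an interpretation satisfies the
clauses `l ≃ r ∨ C` and `L[t] ∨ D`, where `lσ = t` and `Cσ ⊆ D` as multisets,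
then it also satisfies `L[rσ] ∨ D`. -/
theorem subsumption_demodulation_sound {V F P : Type} (M : Str F P)
    (σ : V → Tm V F) (l r t : Tm V F) (C D : Clause V F P) (L : LCtx V F P)
    (hmatch : l.subst σ = t)
    (hsub : C.map (Lit.subst σ) ≤ D)
    (hside : Clause.sat M (Lit.eq l r ::ₘ C))
    (hmain : Clause.sat M (L.fill t ::ₘ D)) :
    Clause.sat M (L.fill (r.subst σ) ::ₘ D) := by
  intro ν
  obtain ⟨Lm, hLm, hLms⟩ := hmain ν
  rw [Multiset.mem_cons] at hLm
  rcases hLm with rfl | hLmD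
  · obtain ⟨Ls, hLs, hLss⟩ := hside (fun v => (σ v).eval M ν)
    rw [Multiset.mem_cons] at hLs
    rcases hLs with rfl | hLsC
    · refine ⟨L.fill (r.subst σ), Multiset.mem_cons_self _ _, ?_⟩
      have heq : t.eval M ν = (r.subst σ).eval M ν := by
        rw [← hmatch, Tm.eval_subst, Tm.eval_subst]
        exact hLss
      exact (LCtx.fill_congr M ν t (r.subst σ) heq L).mp hLms
    · refine ⟨Ls.subst σ, Multiset.mem_cons_of_mem ?_, ?_⟩
      · exact Multiset.mem_of_le hsub (Multiset.mem_map_of_mem _ hLsC)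
      · rw [Lit.sat_subst]; exact hLss
  · exact ⟨Lm, Multiset.mem_cons_of_mem hLmD, hLms⟩
end

section
/- The conclusion of subsumption demodulation is smaller than its main premise: if lσ = t, Cσ ⊆_M D, and lσ ≻ rσ, then L[t] ∨ D ≻ L[rσ] ∨ D in the multiset extension of the literal ordering. -/
/-- Dershowitz–Manna multiset extension of a strict order `gt` (read `gt x y`
as `x ≻ y`): `MulGT gt M N` holds iff `N` is obtained from `M` by removing a
nonempty sub-multiset `X` and adding a multiset `Y` all of whose elements are
dominated by some element of `X`. -/
def MulGT {α : Type _} (gt : α → α → Prop) (M N : Multiset α) : Prop :=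
  ∃ X Y Z : Multiset α, X ≠ 0 ∧ M = Z + X ∧ N = Z + Y ∧ ∀ y ∈ Y, ∃ x ∈ X, gt x y

/-- The conclusion of subsumption demodulation is smaller than its main
premise: if `lσ = t`, `Cσ ⊆_M D` and `lσ ≻ rσ`, then
`L[t] ∨ D ≻ L[rσ] ∨ D` in the multiset extension of the literal ordering.
Here `Term` and `LitT` are the types of terms and literals, `gtT`/`gtL` the
term/literal orderings, `L` the literal context `L[·]` (with the monotonicity
property of the extended ordering), and `substT`/`substL` application of the
substitution `σ` to terms/literals. -/
theorem sd_conclusion_smaller_than_main_premise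
    {Term LitT : Type}
    (gtT : Term → Term → Prop) (gtL : LitT → LitT → Prop)
    (L : Term → LitT)
    (hmono : ∀ s s' : Term, gtT s s' → gtL (L s) (L s'))
    (substT : Term → Term) (substL : LitT → LitT)
    (l r t : Term) (C D : Multiset LitT)
    (hmatch : substT l = t)
    (hsub : C.map substL ≤ D)
    (hord : gtT (substT l) (substT r)) :
    MulGT gtL (L t ::ₘ D) (L (substT r) ::ₘ D) := by
  refine ⟨{L t}, {L (substT r)}, D, by simp, by rw [add_comm, Multiset.singleton_add], by rw [add_comm, Multiset.singleton_add], ?_⟩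
  intro y hy
  simp at hy
  subst hy hmatch
  exact ⟨L (substT l), by simp, hmono _ _ hord⟩
end
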